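/- arXiv:cs/0702162 — 2 statements merged into one kernel-verified Lean document; each statement's English description precedes it below -/
import Mathlib

section
/- Let A and B be Z-matrices with A ≥ B entrywise. If B is a P-matrix, then A is a P-matrix and 0 ≤ A⁻¹ ≤ B⁻¹ entrywise. -/
/-- A real square matrix is a Z-matrix if all its off-diagonal entries are nonpositive. -/
def IsZMatrix {n : ℕ} (A : Matrix (Fin n) (Fin n) ℝ) : Prop :=
  ∀ i j, i ≠ j → A i j ≤ 0

/-- A real square matrix is a P-matrix if all its principal minors are positive. -/
def IsPMatrix {n : ℕ} (A : Matrix (Fin n) (Fin n) ℝ) : Prop :=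
  ∀ S : Finset (Fin n),
    0 < (A.submatrix (fun i : {x // x ∈ S} => (i : Fin n))
          (fun i : {x // x ∈ S} => (i : Fin n))).det

/-!
Eliminate the first row and column. The pivot of `A` dominates that of `B`, which is positive
since `B` is a P-matrix. The Schur complement of a Z-matrix is a Z-matrix, that of `A` still
dominates that of `B`, and that of a P-matrix is a P-matrix, so by induction the Schur complement
of `A` has positive determinant and nonnegative inverse. Then `det A` is the pivot times its
determinant, and every block of the block-inverse formula is a product of nonnegative matrices.
Applied to principal submatrices this makes `A` a P-matrix, and finally
`B⁻¹ - A⁻¹ = B⁻¹ (A - B) A⁻¹ ≥ 0`.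
-/

namespace Matrix

section Nonneg

variable {ι κ m n R : Type*}

def Nonneg [Zero R] [LE R] (M : Matrix m n R) : Prop := ∀ i j, 0 ≤ M i j

theorem Nonneg.fromBlocks [Zero R] [LE R] {A : Matrix m κ R} {B : Matrix m n R}
    {C : Matrix ι κ R} {D : Matrix ι n R} (hA : A.Nonneg) (hB : B.Nonneg) (hC : C.Nonneg)
    (hD : D.Nonneg) : (fromBlocks A B C D).Nonneg := by
  rintro (i | i) (j | j)
  exacts [hA i j, hB i j, hC i j, hD i j]

variable [CommRing R] [PartialOrder R] [IsOrderedRing R]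

theorem Nonneg.add {M N : Matrix m n R} (hM : M.Nonneg) (hN : N.Nonneg) : (M + N).Nonneg :=
  fun i j => add_nonneg (hM i j) (hN i j)

theorem Nonneg.mul [Fintype ι] {M : Matrix m ι R} {N : Matrix ι n R} (hM : M.Nonneg)
    (hN : N.Nonneg) : (M * N).Nonneg :=
  fun i j => Finset.sum_nonneg fun k _ => mul_nonneg (hM i k) (hN k j)

variable [Fintype ι] [DecidableEq ι]

theorem nonneg_inv_fromBlocks [Fintype m] [DecidableEq m] {A : Matrix m m R} {B : Matrix m ι R}
    {C : Matrix ι m R} {D : Matrix ι ι R} (hA : IsUnit A.det)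
    (hS : IsUnit (D - C * A⁻¹ * B).det) (hA' : A⁻¹.Nonneg) (hB : (-B).Nonneg) (hC : (-C).Nonneg)
    (hS' : (D - C * A⁻¹ * B)⁻¹.Nonneg) : (fromBlocks A B C D)⁻¹.Nonneg := by
  let := A.invertibleOfIsUnitDet hA
  let := (D - C * ⅟A * B).invertibleOfIsUnitDet (by rwa [invOf_eq_nonsing_inv])
  let := fromBlocks₁₁Invertible A B C D
  rw [← invOf_eq_nonsing_inv, invOf_fromBlocks₁₁_eq]
  simp only [invOf_eq_nonsing_inv]
  set S := D - C * A⁻¹ * B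
  have hAB : (A⁻¹ * -B).Nonneg := hA'.mul hB
  have hSC : (S⁻¹ * -C).Nonneg := hS'.mul hC
  refine .fromBlocks ?_ ?_ ?_ hS'
  · convert hA'.add (((hAB.mul hS').mul hC).mul hA') using 2
    simp only [Matrix.mul_neg, Matrix.neg_mul, neg_neg]
  · convert hAB.mul hS' using 1
    simp only [Matrix.mul_neg, Matrix.neg_mul]
  · convert hSC.mul hA' using 1
    simp only [Matrix.mul_neg, Matrix.neg_mul]

theorem inv_le_inv_of_le {A B : Matrix ι ι R} (hA : IsUnit A.det) (hB : IsUnit B.det)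
    (hA' : A⁻¹.Nonneg) (hB' : B⁻¹.Nonneg) (hAB : ∀ i j, B i j ≤ A i j) (i j : ι) :
    A⁻¹ i j ≤ B⁻¹ i j := by
  have hdiff : B⁻¹ - A⁻¹ = B⁻¹ * (A - B) * A⁻¹ := by
    rw [Matrix.mul_sub, Matrix.sub_mul, Matrix.mul_assoc, mul_nonsing_inv _ hA, Matrix.mul_one,
      nonsing_inv_mul _ hB, Matrix.one_mul]
  have hAB' : (A - B).Nonneg := fun i j => sub_nonneg.mpr (hAB i j)
  simpa [← hdiff, sub_nonneg] using (hB'.mul hAB').mul hA' i j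

end Nonneg

variable {𝕜 : Type*} [Field 𝕜]

section PivotSchur

variable {m : Type*}

/-- Only used with a nonzero pivot `M (inl ()) (inl ())`, so the junk value of `/ 0` never
matters. -/
def pivotSchur (M : Matrix (Unit ⊕ m) (Unit ⊕ m) 𝕜) : Matrix m m 𝕜 :=
  of fun i j =>
    M (.inr i) (.inr j) - M (.inr i) (.inl ()) * M (.inl ()) (.inr j) / M (.inl ()) (.inl ())

theorem toBlocks₂₂_sub_eq_pivotSchur (M : Matrix (Unit ⊕ m) (Unit ⊕ m) 𝕜) :
    M.toBlocks₂₂ - M.toBlocks₂₁ * M.toBlocks₁₁⁻¹ * M.toBlocks₁₂ = pivotSchur M := by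
  ext i j
  simp [pivotSchur, mul_apply, toBlocks₁₁, toBlocks₁₂, toBlocks₂₁, toBlocks₂₂, div_eq_mul_inv]
  ring

theorem det_eq_mul_det_pivotSchur [Fintype m] [DecidableEq m] (M : Matrix (Unit ⊕ m) (Unit ⊕ m) 𝕜)
    (h : M (.inl ()) (.inl ()) ≠ 0) : M.det = M (.inl ()) (.inl ()) * (pivotSchur M).det := by
  let := M.toBlocks₁₁.invertibleOfIsUnitDet (by simpa [toBlocks₁₁] using h)
  conv_lhs => rw [← fromBlocks_toBlocks M]
  rw [det_fromBlocks₁₁, invOf_eq_nonsing_inv, toBlocks₂₂_sub_eq_pivotSchur]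
  simp [toBlocks₁₁]

end PivotSchur

variable [LinearOrder 𝕜]

section ZPMatrices

variable {ι : Type*}

def IsZ (A : Matrix ι ι 𝕜) : Prop := ∀ i j, i ≠ j → A i j ≤ 0

/-- Principal minors are indexed by injections rather than by subsets, so that the notion is
stable under reindexing. -/
def IsP (A : Matrix ι ι 𝕜) : Prop :=
  ∀ (κ : Type) [Fintype κ] [DecidableEq κ] (f : κ → ι), f.Injective → 0 < (A.submatrix f f).det

theorem IsZ.submatrix {κ : Type*} {A : Matrix ι ι 𝕜} (hA : A.IsZ) {f : κ → ι}
    (hf : f.Injective) : (A.submatrix f f).IsZ :=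
  fun _ _ hij => hA _ _ (hf.ne hij)

theorem IsZ.of_le {A B : Matrix ι ι 𝕜} (hA : A.IsZ) (hAB : ∀ i j, B i j ≤ A i j) : B.IsZ :=
  fun i j hij => (hAB i j).trans (hA i j hij)

theorem IsP.submatrix {κ : Type} [Fintype κ] [DecidableEq κ] {A : Matrix ι ι 𝕜} (hA : A.IsP)
    {f : κ → ι} (hf : f.Injective) : (A.submatrix f f).IsP :=
  fun _ _ _ g hg => by simpa only [submatrix_submatrix] using hA _ (f ∘ g) (hf.comp hg)

theorem IsP.diag_pos {A : Matrix ι ι 𝕜} (hA : A.IsP) (i : ι) : 0 < A i i := by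
  simpa using hA Unit (fun _ => i) (Function.injective_of_subsingleton _)

end ZPMatrices

variable [IsStrictOrderedRing 𝕜]

section PivotSchur

variable {m : Type*}

theorem IsZ.pivotSchur {M : Matrix (Unit ⊕ m) (Unit ⊕ m) 𝕜} (hM : M.IsZ)
    (hp : 0 < M (.inl ()) (.inl ())) : M.pivotSchur.IsZ := by
  intro i j hij
  have hcb : 0 ≤ M (.inr i) (.inl ()) * M (.inl ()) (.inr j) :=
    mul_nonneg_of_nonpos_of_nonpos (hM _ _ Sum.inr_ne_inl) (hM _ _ Sum.inl_ne_inr)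
  have hd : M (.inr i) (.inr j) ≤ 0 := hM _ _ (Sum.inr_injective.ne hij)
  have := div_nonneg hcb hp.le
  simp only [Matrix.pivotSchur, of_apply]
  linarith

theorem pivotSchur_le_pivotSchur {M N : Matrix (Unit ⊕ m) (Unit ⊕ m) 𝕜} (hM : M.IsZ)
    (hNM : ∀ i j, N i j ≤ M i j) (hp : 0 < N (.inl ()) (.inl ())) (i j : m) :
    N.pivotSchur i j ≤ M.pivotSchur i j := by
  have hc := hM (.inr i) (.inl ()) Sum.inr_ne_inl
  have hb := hM (.inl ()) (.inr j) Sum.inl_ne_inr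
  have hcb : M (.inr i) (.inl ()) * M (.inl ()) (.inr j) ≤
      N (.inr i) (.inl ()) * N (.inl ()) (.inr j) :=
    mul_le_mul_of_nonpos_of_nonpos' (hNM _ _) (hNM _ _) hc ((hNM _ _).trans hb)
  have hquot : M (.inr i) (.inl ()) * M (.inl ()) (.inr j) / M (.inl ()) (.inl ()) ≤
      N (.inr i) (.inl ()) * N (.inl ()) (.inr j) / N (.inl ()) (.inl ()) :=
    div_le_div₀ ((mul_nonneg_of_nonpos_of_nonpos hc hb).trans hcb) hcb hp (hNM _ _)
  simp only [Matrix.pivotSchur, of_apply]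
  linarith [hNM (.inr i) (.inr j)]

theorem IsP.pivotSchur {M : Matrix (Unit ⊕ m) (Unit ⊕ m) 𝕜} (hM : M.IsP) :
    M.pivotSchur.IsP := by
  intro κ _ _ f hf
  have hp : 0 < M (.inl ()) (.inl ()) := hM.diag_pos _
  have hsub := hM _ (Sum.map id f) (Function.injective_id.sumMap hf)
  rw [det_eq_mul_det_pivotSchur (M.submatrix (Sum.map id f) (Sum.map id f)) hp.ne'] at hsub
  exact pos_of_mul_pos_right hsub hp.le

theorem IsZ.nonneg_inv_of_pivotSchur [Fintype m] [DecidableEq m]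
    {M : Matrix (Unit ⊕ m) (Unit ⊕ m) 𝕜} (hM : M.IsZ) (hp : 0 < M (.inl ()) (.inl ()))
    (hS : IsUnit M.pivotSchur.det) (hS' : M.pivotSchur⁻¹.Nonneg) : M⁻¹.Nonneg := by
  rw [← fromBlocks_toBlocks M]
  refine nonneg_inv_fromBlocks ?_ (by rwa [toBlocks₂₂_sub_eq_pivotSchur]) ?_ ?_ ?_
    (by rwa [toBlocks₂₂_sub_eq_pivotSchur])
  · simpa [toBlocks₁₁] using hp.ne'
  · rintro ⟨⟩ ⟨⟩
    simpa [toBlocks₁₁] using hp.le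
  · exact fun _ j => neg_nonneg.mpr (hM _ (.inr j) Sum.inl_ne_inr)
  · exact fun i _ => neg_nonneg.mpr (hM (.inr i) _ Sum.inr_ne_inl)

end PivotSchur

section Comparison

variable {ι : Type}

theorem IsZ.det_pos_and_nonneg_inv_of_le [Fintype ι] [DecidableEq ι] {A B : Matrix ι ι 𝕜} (hA : A.IsZ)
    (hBA : ∀ i j, B i j ≤ A i j) (hB : B.IsP) : 0 < A.det ∧ A⁻¹.Nonneg := by
  induction h : Fintype.card ι generalizing ι with
  | zero =>
    have := Fintype.card_eq_zero_iff.mp h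
    exact ⟨by simp, fun i => isEmptyElim i⟩
  | succ n ih =>
    obtain ⟨p⟩ : Nonempty ι := Fintype.card_pos_iff.mp (by omega)
    let e : Unit ⊕ {i // i ≠ p} ≃ ι := (Equiv.sumComm _ _).trans
      ((Equiv.optionEquivSumPUnit _).symm.trans (Equiv.optionSubtypeNe p))
    have hcard : Fintype.card {i // i ≠ p} = n := by
      have := Fintype.card_congr (Equiv.optionSubtypeNe p)
      simp only [Fintype.card_option] at this
      omega
    set M := A.submatrix e e
    have hM : M.IsZ := hA.submatrix e.injective
    have hN : (B.submatrix e e).IsP := hB.submatrix e.injective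
    have hp : 0 < M (.inl ()) (.inl ()) := (hN.diag_pos _).trans_le (hBA _ _)
    obtain ⟨hdet, hinv⟩ := ih (hM.pivotSchur hp)
      (pivotSchur_le_pivotSchur hM (fun _ _ => hBA _ _) (hN.diag_pos _)) hN.pivotSchur hcard
    have hMinv : M⁻¹.Nonneg := hM.nonneg_inv_of_pivotSchur hp hdet.ne'.isUnit hinv
    refine ⟨?_, fun i j => ?_⟩
    · rw [← det_submatrix_equiv_self e, det_eq_mul_det_pivotSchur _ hp.ne']
      exact mul_pos hp hdet
    · simpa [M] using hMinv (e.symm i) (e.symm j)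

theorem IsZ.isP_of_le {A B : Matrix ι ι 𝕜} (hA : A.IsZ) (hBA : ∀ i j, B i j ≤ A i j)
    (hB : B.IsP) : A.IsP :=
  fun _ _ _ _ hf =>
    ((hA.submatrix hf).det_pos_and_nonneg_inv_of_le (fun _ _ => hBA _ _) (hB.submatrix hf)).1

end Comparison

end Matrix

theorem isPMatrix_iff_isP {n : ℕ} {A : Matrix (Fin n) (Fin n) ℝ} : IsPMatrix A ↔ A.IsP := by
  refine ⟨fun h κ _ _ f hf => ?_, fun h S => h _ _ Subtype.coe_injective⟩
  let e : κ ≃ {x // x ∈ (Set.range f).toFinset} :=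
    (Equiv.ofInjective f hf).trans (Equiv.subtypeEquivRight fun _ => Set.mem_toFinset.symm)
  have hsub : A.submatrix f f = (A.submatrix (↑) (↑)).submatrix e e := rfl
  rw [hsub, Matrix.det_submatrix_equiv_self]
  exact h _

theorem z_matrix_comparison_general {n : ℕ} (A B : Matrix (Fin n) (Fin n) ℝ)
    (hZA : IsZMatrix A)
    (hAB : ∀ i j, B i j ≤ A i j) (hPB : IsPMatrix B) :
    IsPMatrix A ∧ (∀ i j, 0 ≤ A⁻¹ i j) ∧ (∀ i j, A⁻¹ i j ≤ B⁻¹ i j) := by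
  have hA : A.IsZ := hZA
  have hB : B.IsP := isPMatrix_iff_isP.mp hPB
  obtain ⟨hdetA, hinvA⟩ := hA.det_pos_and_nonneg_inv_of_le hAB hB
  obtain ⟨hdetB, hinvB⟩ := (hA.of_le hAB).det_pos_and_nonneg_inv_of_le (fun _ _ => le_rfl) hB
  exact ⟨isPMatrix_iff_isP.mpr (hA.isP_of_le hAB hB), hinvA,
    Matrix.inv_le_inv_of_le hdetA.ne'.isUnit hdetB.ne'.isUnit hinvA hinvB hAB⟩

theorem z_matrix_comparison {n : ℕ} (A B : Matrix (Fin n) (Fin n) ℝ)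
    (hZA : IsZMatrix A) (hZB : IsZMatrix B)
    (hAB : ∀ i j, B i j ≤ A i j) (hPB : IsPMatrix B) :
    IsPMatrix A ∧ (∀ i j, 0 ≤ A⁻¹ i j) ∧ (∀ i j, A⁻¹ i j ≤ B⁻¹ i j) :=
  z_matrix_comparison_general A B hZA hAB hPB
end

section
/- Let Z^max(R*) be the Q×Q matrix with unit diagonal and off-diagonal entries −(e^{R*_q}−1)β^max_{qr} where β^max_{qr} = max_k |H_{qr}(k)|²/|H_{rr}(k)|², and let D(k) = Diag(|H_{qq}(k)|²). If Z^max(R*) is a P-matrix, then Z_k(R*) ≥ Z^max(R*)D(k) entrywise, and consequently every Z_k(R*) is a P-matrix. -/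
/-! P-matrices are exactly the matrices that reverse the sign of no nonzero vector: for every
`x ≠ 0` some `i` has `0 < x i * (A *ᵥ x) i` (Fiedler–Pták). `Zmax * D k` is a P-matrix, being a
P-matrix times a positive diagonal matrix, and `Z_k` dominates it entrywise with nonpositive
off-diagonal entries; hence `|x i| * (Zmax * D k *ᵥ |x|) i ≤ x i * (Z_k *ᵥ x) i` term by term, and
`Z_k` inherits sign non-reversal from `Zmax * D k`. -/

open Finset

open Matrix

namespace Matrix

variable {l m n R : Type*} [Fintype n] [CommRing R]

theorem det_add_diagonal [DecidableEq n] (M : Matrix n n R) (d : n → R) :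
    (M + diagonal d).det =
      ∑ s : Finset n, (∏ i ∈ sᶜ, d i) * (M.submatrix ((↑) : s → n) (↑)).det := by
  have hrows : ∀ s : Finset n, s.piecewise M.row (diagonal d).row =
      fun i => (if i ∈ s then 1 else d i) • s.piecewise M.row (row 1) i := by
    intro s
    funext i j
    by_cases hi : i ∈ s <;> simp [Finset.piecewise, hi, row, diagonal_apply, one_apply]
  change detRowAlternating (M.row + (diagonal d).row) = _
  rw [AlternatingMap.map_add_univ]
  refine sum_congr rfl fun s _ => ?_
  rw [hrows, AlternatingMap.map_smul_univ, smul_eq_mul, ← det_piecewise_one_eq_submatrix_det,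
    prod_ite, prod_const_one, one_mul]
  congr 2
  ext i
  simp

theorem submatrix_coe_mulVec_of_support_subset (M : Matrix m n R) (f : l → m) {s : Finset n}
    {x : n → R} (hx : Function.support x ⊆ s) :
    M.submatrix f ((↑) : s → n) *ᵥ (fun j => x j) = fun i => (M *ᵥ x) (f i) := by
  funext i
  simp only [mulVec, dotProduct, submatrix_apply]
  rw [sum_coe_sort s fun j => M (f i) j * x j]
  refine sum_subset (subset_univ s) fun j _ hj => ?_
  rw [Function.notMem_support.mp fun h => hj (hx h), mul_zero]

theorem mul_mulVec_apply (M : Matrix n n R) (x : n → R) (i : n) :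
    x i * (M *ᵥ x) i = ∑ j, M i j * (x i * x j) := by
  simp only [mulVec, dotProduct, mul_sum]
  exact sum_congr rfl fun j _ => by ring

/-- The homotopy `t ↦ (1 - t) • M + t • 1` from `M` to `1` never becomes singular, since a kernel
vector would have its sign reversed by `M`. -/
theorem det_pos_of_forall_exists_mul_mulVec_pos [DecidableEq n] {M : Matrix n n ℝ}
    (hM : ∀ x : n → ℝ, x ≠ 0 → ∃ i, 0 < x i * (M *ᵥ x) i) : 0 < M.det := by
  set f : ℝ → ℝ := fun t => ((1 - t) • M + t • (1 : Matrix n n ℝ)).det with hf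
  have hcont : Continuous f := by
    apply Continuous.matrix_det
    fun_prop
  have hf1 : f 1 = 1 := by simp [hf]
  have hne : ∀ t ∈ Set.Ico (0 : ℝ) 1, f t ≠ 0 := by
    rintro t ⟨ht0, ht1⟩ hzero
    obtain ⟨x, hx, hker⟩ := exists_mulVec_eq_zero_iff.2 hzero
    obtain ⟨i, hi⟩ := hM x hx
    have hker_i : (1 - t) * (M *ᵥ x) i + t * x i = 0 := by
      simpa [add_mulVec, smul_mulVec] using congrFun hker i
    have : x i * ((1 - t) * (M *ᵥ x) i + t * x i) = 0 := by rw [hker_i, mul_zero]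
    nlinarith [mul_pos (sub_pos.2 ht1) hi, mul_nonneg ht0 (mul_self_nonneg (x i))]
  by_contra! hdet
  obtain ⟨t, ht, hft⟩ := intermediate_value_Icc zero_le_one hcont.continuousOn
    (show (0 : ℝ) ∈ Set.Icc (f 0) (f 1) by simp [hf, hdet])
  have ht1 : t ≠ 1 := by
    rintro rfl
    simp [hf1] at hft
  exact hne t ⟨ht.1, lt_of_le_of_ne ht.2 ht1⟩ hft

end Matrix

section PMatrix

variable {n : ℕ} {A B : Matrix (Fin n) (Fin n) ℝ}

theorem IsPMatrix.det_submatrix_pos (hA : IsPMatrix A) {ι : Type*} [Fintype ι] [DecidableEq ι]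
    {f : ι → Fin n} (hf : Function.Injective f) : 0 < (A.submatrix f f).det := by
  let e : ι ≃ {x // x ∈ univ.image f} :=
    (Equiv.ofInjective f hf).trans (Equiv.subtypeEquivRight fun x => by simp)
  have : A.submatrix f f = (A.submatrix ((↑) : univ.image f → Fin n) (↑)).submatrix e e := rfl
  rw [this, det_submatrix_equiv_self]
  exact hA _

theorem IsPMatrix.add_diagonal (hA : IsPMatrix A) {d : Fin n → ℝ} (hd : 0 ≤ d) :
    IsPMatrix (A + diagonal d) := by
  intro S
  have : (A + diagonal d).submatrix ((↑) : S → Fin n) (↑) =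
      A.submatrix (↑) (↑) + diagonal fun i : S => d i := by
    rw [submatrix_add, Pi.add_apply, Pi.add_apply, submatrix_diagonal _ _ Subtype.val_injective]
    rfl
  rw [this, det_add_diagonal]
  have hminor : ∀ t : Finset S, 0 < ((A.submatrix ((↑) : S → Fin n) ((↑) : S → Fin n)).submatrix
      ((↑) : t → S) ((↑) : t → S)).det := fun t => by
    rw [submatrix_submatrix]
    exact hA.det_submatrix_pos (Subtype.val_injective.comp Subtype.val_injective)
  refine sum_pos' (fun t _ => ?_) ⟨univ, mem_univ _, ?_⟩
  · exact mul_nonneg (prod_nonneg fun i _ => hd _) (hminor t).le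
  · rw [compl_univ, prod_empty, one_mul]
    exact hminor univ

theorem IsPMatrix.mul_diagonal (hA : IsPMatrix A) {d : Fin n → ℝ} (hd : ∀ i, 0 < d i) :
    IsPMatrix (A * diagonal d) := by
  intro S
  have : (A * diagonal d).submatrix ((↑) : S → Fin n) (↑) =
      A.submatrix (↑) (↑) * diagonal fun i : S => d i := by
    ext i j
    simp [Matrix.mul_diagonal]
  rw [this, det_mul, det_diagonal]
  exact mul_pos (hA S) (prod_pos fun i _ => hd i)

/-- If `x i * (A *ᵥ x) i ≤ 0` for all `i`, a nonnegative diagonal `d` makes `(A + diagonal d) *ᵥ x`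
vanish on the support of `x`, so the principal minor of `A + diagonal d` on that support is `0`. -/
theorem IsPMatrix.exists_mul_mulVec_pos (hA : IsPMatrix A) {x : Fin n → ℝ} (hx : x ≠ 0) :
    ∃ i, 0 < x i * (A *ᵥ x) i := by
  by_contra! hneg
  set d : Fin n → ℝ := fun i => -(x i * (A *ᵥ x) i) / x i ^ 2
  have hd : 0 ≤ d := fun i => div_nonneg (neg_nonneg.2 (hneg i)) (sq_nonneg _)
  have hker : ∀ i, x i ≠ 0 → ((A + diagonal d) *ᵥ x) i = 0 := by
    intro i hi
    simp only [add_mulVec, mulVec_diagonal, Pi.add_apply, d]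
    field_simp
    ring
  set S := univ.filter fun i => x i ≠ 0
  have hsupp : Function.support x ⊆ S := fun i hi => by simpa [S] using hi
  refine (hA.add_diagonal hd S).ne' (exists_mulVec_eq_zero_iff.1 ⟨fun j => x j, ?_, ?_⟩)
  · obtain ⟨j, hj⟩ := Function.ne_iff.1 hx
    exact Function.ne_iff.2 ⟨⟨j, by simpa [S] using hj⟩, hj⟩
  · rw [submatrix_coe_mulVec_of_support_subset _ _ hsupp]
    funext i
    exact hker i (mem_filter.1 i.2).2

theorem isPMatrix_of_forall_exists_mul_mulVec_pos
    (h : ∀ x : Fin n → ℝ, x ≠ 0 → ∃ i, 0 < x i * (A *ᵥ x) i) : IsPMatrix A := by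
  intro S
  refine det_pos_of_forall_exists_mul_mulVec_pos fun x hx => ?_
  set x' : Fin n → ℝ := fun i => if h : i ∈ S then x ⟨i, h⟩ else 0
  have hrestrict : (fun j : S => x' j) = x := funext fun j => dif_pos j.2
  have hsupp : Function.support x' ⊆ S := fun i hi => by
    by_contra hiS
    exact hi (dif_neg hiS)
  have hx'0 : x' ≠ 0 := by
    intro h0
    exact hx (by rw [← hrestrict, h0]; rfl)
  obtain ⟨i, hi⟩ := h x' hx'0
  have hiS : i ∈ S := by
    by_contra hiS
    simp [x', hiS] at hi
  refine ⟨⟨i, hiS⟩, ?_⟩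
  rw [← hrestrict, submatrix_coe_mulVec_of_support_subset _ _ hsupp]
  exact hi

theorem IsPMatrix.of_le (hB : IsPMatrix B) (hBA : ∀ i j, B i j ≤ A i j)
    (hA : ∀ i j, i ≠ j → A i j ≤ 0) : IsPMatrix A := by
  refine isPMatrix_of_forall_exists_mul_mulVec_pos fun x hx => ?_
  have habs : (fun j => |x j|) ≠ 0 := by
    obtain ⟨j, hj⟩ := Function.ne_iff.1 hx
    exact Function.ne_iff.2 ⟨j, by simpa using hj⟩
  obtain ⟨i, hi⟩ := hB.exists_mul_mulVec_pos habs
  refine ⟨i, hi.trans_le ?_⟩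
  rw [mul_mulVec_apply B (fun j => |x j|), mul_mulVec_apply A x]
  refine sum_le_sum fun j _ => ?_
  rcases eq_or_ne i j with rfl | hij
  · rw [← abs_mul, abs_mul_self]
    exact mul_le_mul_of_nonneg_right (hBA i i) (mul_self_nonneg _)
  · calc B i j * (|x i| * |x j|) ≤ A i j * (|x i| * |x j|) :=
          mul_le_mul_of_nonneg_right (hBA i j) (by positivity)
      _ ≤ A i j * (x i * x j) :=
          mul_le_mul_of_nonpos_left ((le_abs_self _).trans_eq (abs_mul _ _)) (hA i j hij)

end PMatrix

theorem Zmax_P_implies_Zk_P {Q N : ℕ} [NeZero N]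
    (H : Fin Q → Fin Q → Fin N → ℝ) (hH : ∀ q r k, 0 < H q r k)
    (Rstar : Fin Q → ℝ) (hR : ∀ q, 0 < Rstar q)
    (βmax : Fin Q → Fin Q → ℝ)
    (hβ : ∀ q r, βmax q r = Finset.univ.sup' Finset.univ_nonempty
        (fun k : Fin N => H q r k / H r r k))
    (Zmax : Matrix (Fin Q) (Fin Q) ℝ)
    (hZmax : ∀ q r, Zmax q r =
        if q = r then 1 else -(Real.exp (Rstar q) - 1) * βmax q r)
    (Zk : Fin N → Matrix (Fin Q) (Fin Q) ℝ)
    (hZk : ∀ k q r, Zk k q r =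
        if q = r then H q q k else -(Real.exp (Rstar q) - 1) * H q r k)
    (D : Fin N → Matrix (Fin Q) (Fin Q) ℝ)
    (hD : ∀ k, D k = Matrix.diagonal fun q => H q q k)
    (hP : IsPMatrix Zmax) :
    (∀ k q r, (Zmax * D k) q r ≤ Zk k q r) ∧ ∀ k, IsPMatrix (Zk k) := by
  have hexp : ∀ q, 0 ≤ Real.exp (Rstar q) - 1 := fun q => by
    linarith [Real.add_one_le_exp (Rstar q), hR q]
  have hle : ∀ k q r, (Zmax * D k) q r ≤ Zk k q r := by
    intro k q r
    rw [hD, Matrix.mul_diagonal, hZmax, hZk]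
    split_ifs with hqr
    · simp [hqr]
    · have hβle : H q r k ≤ βmax q r * H r r k := by
        rw [← div_le_iff₀ (hH r r k), hβ]
        exact le_sup' (fun k => H q r k / H r r k) (mem_univ k)
      nlinarith [mul_le_mul_of_nonneg_left hβle (hexp q)]
  refine ⟨hle, fun k => ?_⟩
  have hPk : IsPMatrix (Zmax * D k) := hD k ▸ hP.mul_diagonal fun q => hH q q k
  refine hPk.of_le (hle k) fun q r hqr => ?_
  rw [hZk, if_neg hqr, neg_mul]
  exact neg_nonpos.2 (mul_nonneg (hexp q) (hH q r k).le)
end
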